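/- Let α, β be real numbers with αβ(2αβ−1)(α−1) ≠ 0, and define on 3×3 matrices F(x) = [(Σ_n Δ_n^1)^α + (Σ_n Δ_n^2)^α + (Σ_n Δ_n^3)^α]^β, where Δ_n^k are the cofactors of x. Then at any point where the relevant quantities are positive, the gradient matrix (Φ_k^i) = (∂Φ/∂Δ_i^k) has rank 1, and the cofactors D_k^n of y = F'(x) satisfy D_k^1 = D_k^2 = D_k^3 for k = 1, 2, 3; i.e., the image of F' lies in the set of matrices whose cofactor matrix has all three rows (in the appropriate indexing) equal. -/

import Mathlib

/-!
Both claims hold for any `Φ` that depends on `M` only through its column sums `∑ₙ M n k`.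
Moving mass inside one column of `M` does not change `Φ`, so `∂Φ/∂Δᵢᵏ` does not depend on `i`,
and the gradient matrix, constant along its second index, has rank one.

For `F x = Φ (cof x)` these column sums are the row sums of `adj x`, i.e. the Cramer determinants
`det (x with column j replaced by 𝟙)`. Adding `t • 𝟙` to column `k` of `x` changes none of them
(for `j ≠ k` it adds a multiple of column `j` to column `k`), so each row of `y = F' x` sums to
zero. Then `adj y n k - adj y n' k` is the determinant of `y` with row `k` replaced by
`eₙ - eₙ'`, a matrix that kills `𝟙`, hence it vanishes.
-/

attribute [local instance] Matrix.normedAddCommGroup Matrix.normedSpace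

open Matrix

section FDeriv

variable {𝕜 E F : Type*} [NontriviallyNormedField 𝕜] [NormedAddCommGroup E] [NormedSpace 𝕜 E]
  [NormedAddCommGroup F] [NormedSpace 𝕜 F]

theorem fderiv_apply_eq_zero_of_forall_add_smul {f : E → F} {x v : E}
    (hf : ∀ t : 𝕜, f (x + t • v) = f x) : fderiv 𝕜 f x v = 0 := by
  by_cases hd : DifferentiableAt 𝕜 f x
  · have hconst : HasLineDerivAt 𝕜 f 0 x v := by
      simpa only [HasLineDerivAt, hf] using hasDerivAt_const (0 : 𝕜) (f x)
    exact (hd.hasFDerivAt.hasLineDerivAt v).unique hconst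
  · simp [fderiv_zero_of_not_differentiableAt hd]

theorem fderiv_apply_eq_zero_of_comp_linearMap {G : Type*} [AddCommGroup G] [Module 𝕜 G]
    {f : E → F} {ψ : G → F} {L : E →ₗ[𝕜] G} (hf : ∀ z, f z = ψ (L z)) {x v : E}
    (hv : L v = 0) : fderiv 𝕜 f x v = 0 :=
  fderiv_apply_eq_zero_of_forall_add_smul fun t => by simp [hf, hv]

end FDeriv

namespace Matrix

variable {n R : Type*} [Fintype n] [DecidableEq n] [CommRing R]

theorem sum_single_one_apply (k a b : n) :
    (∑ i, single i k (1 : R)) a b = if b = k then 1 else 0 := by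
  rw [Matrix.sum_apply, Finset.sum_eq_single a]
  · simp [single_apply, eq_comm]
  · intro c _ hc
    simp [hc]
  · simp

theorem adjugate_apply_eq_of_mulVec_one_eq_zero {A : Matrix n n R} (hA : A *ᵥ 1 = 0)
    (i i' k : n) : A.adjugate i k = A.adjugate i' k := by
  have hB : A.updateRow k (Pi.single i 1 - Pi.single i' 1) *ᵥ 1 = 0 := by
    ext a
    rcases eq_or_ne a k with rfl | ha
    · simp [mulVec, dotProduct, Finset.sum_sub_distrib]
    · simpa [mulVec, ha] using congrFun hA a
  have hdet := det_eq_zero_of_mulVec_eq_zero_of_mem_nonZeroDivisors hB (i := k) (by simp)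
  rw [sub_eq_add_neg, det_updateRow_add, ← neg_one_smul R, det_updateRow_smul] at hdet
  rw [adjugate_apply, adjugate_apply]
  linear_combination hdet

theorem adjugate_add_smul_sum_single_mulVec_one (A : Matrix n n R) (k : n) (t : R) :
    (A + t • ∑ i, single i k 1).adjugate *ᵥ 1 = A.adjugate *ᵥ 1 := by
  ext j
  rw [← cramer_eq_adjugate_mulVec, ← cramer_eq_adjugate_mulVec, cramer_apply, cramer_apply]
  rcases eq_or_ne j k with rfl | hj
  · congr 1
    ext a b
    by_cases hb : b = j <;> simp [hb, sum_single_one_apply]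
  · rw [← det_updateCol_add_smul_self (A.updateCol j 1) hj.symm t]
    congr 1
    ext a b
    by_cases hb : b = k
    · subst hb
      simp [hj.symm, sum_single_one_apply, add_comm]
    · by_cases hbj : b = j <;> simp [hb, hbj, hj, sum_single_one_apply]

end Matrix

section ColumnSums

variable {m n F : Type*} [Fintype m] [DecidableEq m] [Fintype n] [DecidableEq n]
  [NormedAddCommGroup F] [NormedSpace ℝ F]

theorem fderiv_single_eq_of_factors_through_colSums {Φ : Matrix m n ℝ → F} {ψ : (n → ℝ) → F}
    (hΦ : ∀ M, Φ M = ψ (fun k => ∑ i, M i k)) (Δ : Matrix m n ℝ) (i i' : m) (k : n) :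
    fderiv ℝ Φ Δ (single i k 1) = fderiv ℝ Φ Δ (single i' k 1) := by
  let colSums : Matrix m n ℝ →ₗ[ℝ] n → ℝ :=
    { toFun := fun M k => ∑ i, M i k
      map_add' := fun M N => by ext; simp [Finset.sum_add_distrib]
      map_smul' := fun c M => by ext; simp [Finset.mul_sum] }
  have hzero : colSums (single i k 1 - single i' k 1) = 0 := by
    ext l
    by_cases hl : k = l <;> simp [colSums, single_apply, hl]
  rw [← sub_eq_zero, ← map_sub]
  exact fderiv_apply_eq_zero_of_comp_linearMap hΦ hzero

theorem sum_fderiv_cofactor_single_eq_zero {Φ : Matrix n n ℝ → F} {ψ : (n → ℝ) → F}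
    (hΦ : ∀ M, Φ M = ψ (fun k => ∑ i, M i k)) (x : Matrix n n ℝ) (k : n) :
    ∑ i, fderiv ℝ (fun z : Matrix n n ℝ => Φ (of fun a b => z.adjugate b a)) x (single i k 1)
      = 0 := by
  rw [← map_sum]
  refine fderiv_apply_eq_zero_of_forall_add_smul fun t => ?_
  have hrow := adjugate_add_smul_sum_single_mulVec_one x k t
  simp only [hΦ, of_apply]
  congr 1
  ext j
  simpa [mulVec, dotProduct] using congrFun hrow j

end ColumnSums

theorem gradient_rank_one_and_equal_cofactors (α β : ℝ)
    (x Δ : Matrix (Fin 3) (Fin 3) ℝ)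
    (Φ : Matrix (Fin 3) (Fin 3) ℝ → ℝ)
    (hΦ : ∀ M : Matrix (Fin 3) (Fin 3) ℝ,
      Φ M = ((∑ n, M n 0) ^ α + (∑ n, M n 1) ^ α + (∑ n, M n 2) ^ α) ^ β)
    (G : Matrix (Fin 3) (Fin 3) ℝ)
    (hG : ∀ k i, G k i = fderiv ℝ Φ Δ (Matrix.single i k 1))
    (y : Matrix (Fin 3) (Fin 3) ℝ)
    (hy : ∀ k n, y k n =
      fderiv ℝ (fun z : Matrix (Fin 3) (Fin 3) ℝ => Φ (Matrix.of fun a b => z.adjugate b a))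
        x (Matrix.single n k 1)) :
    (∀ i k i' k', G k i * G k' i' = G k' i * G k i') ∧
    (∀ k n n', y.adjugate n k = y.adjugate n' k) := by
  let ψ : (Fin 3 → ℝ) → ℝ := fun c => (c 0 ^ α + c 1 ^ α + c 2 ^ α) ^ β
  have hG_const : ∀ k i i', G k i = G k i' := fun k i i' => by
    rw [hG, hG, fderiv_single_eq_of_factors_through_colSums (ψ := ψ) hΦ Δ i i' k]
  have hy_rows : y *ᵥ 1 = 0 := by
    ext k
    simpa [mulVec, dotProduct, hy] using sum_fderiv_cofactor_single_eq_zero (ψ := ψ) hΦ x k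
  refine ⟨fun i k i' k' => ?_,
    fun k n n' => adjugate_apply_eq_of_mulVec_one_eq_zero hy_rows n n' k⟩
  rw [hG_const k' i' i, hG_const k i' i]
  ring
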